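/- arXiv:2310.01307 — 2 statements merged into one kernel-verified Lean document; each statement's English description precedes it below -/
import Mathlib

section
/- Let d > 0, T > 0, K > 1, and B, C > 0 with B² + C² = d² and B² − C² + 2BT > 0. Then (2BT + K·B² + (K−2)·C²)/(2BT + B² − C²) ≥ 1 + (K−1)/(1 + 2T/d) > 1. -/
/-!
Since `B² + C² = d²`, the numerator is the denominator `D = 2BT + B² − C²` plus `(K − 1) d²`,
so the ratio is `1 + (K − 1) d² / D`. As `B ≤ d` and `B² − C² ≤ d²`, we have `D ≤ d (d + 2T)`,
and `(K − 1) d² / (d (d + 2T)) = (K − 1) / (1 + 2T/d)`.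
-/

lemma one_add_div_le_add_div_self {a D E : ℝ} (ha : 0 ≤ a) (hD : 0 < D) (hDE : D ≤ E) :
    1 + a / E ≤ (D + a) / D := by
  rw [add_div, div_self hD.ne']
  gcongr

lemma two_mul_mul_add_sq_sub_sq_le {d T B C : ℝ} (hd : 0 ≤ d) (hT : 0 ≤ T)
    (hcircle : B ^ 2 + C ^ 2 = d ^ 2) :
    2 * B * T + B ^ 2 - C ^ 2 ≤ d * (d + 2 * T) := by
  have hBd : B ≤ d := (abs_le_of_sq_le_sq' (by nlinarith [sq_nonneg C]) hd).2
  nlinarith [sq_nonneg C]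

theorem fna_main_ratio_bound_general (d T K B C : ℝ) (hd : 0 < d) (hT : 0 < T) (hK : 1 < K)
    (hcircle : B ^ 2 + C ^ 2 = d ^ 2)
    (hpos : 0 < B ^ 2 - C ^ 2 + 2 * B * T) :
    (2 * B * T + K * B ^ 2 + (K - 2) * C ^ 2) / (2 * B * T + B ^ 2 - C ^ 2) ≥
        1 + (K - 1) / (1 + 2 * T / d) ∧
      1 < 1 + (K - 1) / (1 + 2 * T / d) := by
  have hD : 0 < 2 * B * T + B ^ 2 - C ^ 2 := by linarith
  have hnum : 2 * B * T + K * B ^ 2 + (K - 2) * C ^ 2 =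
      (2 * B * T + B ^ 2 - C ^ 2) + (K - 1) * d ^ 2 := by
    rw [← hcircle]; ring
  have hbound : (K - 1) / (1 + 2 * T / d) = (K - 1) * d ^ 2 / (d * (d + 2 * T)) := by
    field_simp
  refine ⟨?_, lt_add_of_pos_right 1 (by positivity)⟩
  rw [ge_iff_le, hnum, hbound]
  exact one_add_div_le_add_div_self (by positivity) hD
    (two_mul_mul_add_sq_sub_sq_le hd.le hT.le hcircle)

/-- Main ratio bound of Theorem 1:
`(2BT + KB² + (K−2)C²)/(2BT + B² − C²) ≥ 1 + (K−1)/(1 + 2T/d) > 1`. -/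
theorem fna_main_ratio_bound (d T K B C : ℝ) (hd : 0 < d) (hT : 0 < T) (hK : 1 < K)
    (hB : 0 < B) (hC : 0 < C) (hcircle : B ^ 2 + C ^ 2 = d ^ 2)
    (hpos : 0 < B ^ 2 - C ^ 2 + 2 * B * T) :
    (2 * B * T + K * B ^ 2 + (K - 2) * C ^ 2) / (2 * B * T + B ^ 2 - C ^ 2) ≥
        1 + (K - 1) / (1 + 2 * T / d) ∧
      1 < 1 + (K - 1) / (1 + 2 * T / d) :=
  fna_main_ratio_bound_general d T K B C hd hT hK hcircle hpos
end

section
/- For all x ∈ [0, 1], arcsin(x) ≤ x + x³, and hence arccos(x) ≥ π/2 − x − x³. -/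
/-!
Near `0`, `arcsin x ≤ tan (arcsin x) = x / √(1 - x²)`, and `x / √(1 - x²) ≤ x + x³` as long as
`x² + x⁴ ≤ 1`. Near `1`, Jordan's inequality `sin θ ≥ 2θ/π` gives `arcsin x ≤ π x / 2`, and
`π / 2 ≤ 1 + x²` as soon as `x ≥ 7/9`. The two ranges overlap, and `arccos = π/2 - arcsin`.
-/

open Real

namespace Real

theorem arcsin_le_div_sqrt_one_sub_sq {x : ℝ} (hx₀ : 0 ≤ x) (hx₁ : x < 1) :
    arcsin x ≤ x / √(1 - x ^ 2) := by
  rw [← tan_arcsin]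
  exact le_tan (arcsin_nonneg.2 hx₀) (arcsin_lt_pi_div_two.2 hx₁)

theorem arcsin_le_pi_div_two_mul {x : ℝ} (hx₀ : 0 ≤ x) (hx₁ : x ≤ 1) :
    arcsin x ≤ π / 2 * x := by
  have jordan := mul_le_sin (arcsin_nonneg.2 hx₀) (arcsin_le_pi_div_two x)
  rw [sin_arcsin (by linarith) hx₁] at jordan
  rw [div_mul_eq_mul_div, div_le_iff₀ pi_pos] at jordan
  nlinarith [pi_pos]

end Real

theorem div_sqrt_one_sub_sq_le_self_add_pow_three {x : ℝ} (hx : 0 ≤ x) (h : x ^ 2 + x ^ 4 ≤ 1) :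
    x / √(1 - x ^ 2) ≤ x + x ^ 3 := by
  have hpos : 0 < 1 - x ^ 2 := by nlinarith [sq_nonneg (x ^ 2 - 1)]
  -- `(1 - x²)(1 + x²)² = 1 + x² (1 - x² - x⁴)`
  have hone : 1 ≤ √(1 - x ^ 2) * (1 + x ^ 2) := by
    rw [← sqrt_sq (by positivity : 0 ≤ 1 + x ^ 2), ← sqrt_mul hpos.le, one_le_sqrt]
    nlinarith [sq_nonneg x]
  rw [div_le_iff₀ (sqrt_pos.2 hpos)]
  nlinarith [mul_le_mul_of_nonneg_left hone hx]

/-- For all `x ∈ [0,1]`, `arcsin x ≤ x + x³`, and hence `arccos x ≥ π/2 − x − x³`. -/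
theorem arcsin_le_and_arccos_ge (x : ℝ) (hx : x ∈ Set.Icc (0 : ℝ) 1) :
    Real.arcsin x ≤ x + x ^ 3 ∧ Real.pi / 2 - x - x ^ 3 ≤ Real.arccos x := by
  obtain ⟨hx₀, hx₁⟩ := hx
  have key : arcsin x ≤ x + x ^ 3 := by
    rcases le_or_gt x (7 / 9) with hsmall | hlarge
    · have hx2 : x ^ 2 ≤ (7 / 9) ^ 2 := pow_le_pow_left₀ hx₀ hsmall 2
      have hx4 : x ^ 4 ≤ (7 / 9) ^ 4 := pow_le_pow_left₀ hx₀ hsmall 4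
      exact (arcsin_le_div_sqrt_one_sub_sq hx₀ (by linarith)).trans
        (div_sqrt_one_sub_sq_le_self_add_pow_three hx₀ (by linarith))
    · have hx2 : (7 / 9) ^ 2 ≤ x ^ 2 := pow_le_pow_left₀ (by norm_num) hlarge.le 2
      calc arcsin x ≤ π / 2 * x := arcsin_le_pi_div_two_mul hx₀ hx₁
        _ ≤ x + x ^ 3 := by nlinarith [pi_lt_d2]
  exact ⟨key, by rw [arccos_eq_pi_div_two_sub_arcsin]; linarith⟩
end
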